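/- Let H : ℝ → ℝ be the Heaviside function with H(y) = 1 for y > 0 and H(y) = 0 for y ≤ 0, and let x₁(τ) = ((1/2)cos τ + (−π/4 + τ/2)·sin τ)·H(τ − π/2) + (−(1/2)cos τ + (3π/4 − τ/2)·sin τ)·H(τ − 3π/2) − (τ/4)·sin τ, with x₁'' denoting its (piecewise defined) second derivative at τ ∉ {π/2, 3π/2}. For ω₂ ∈ ℝ define F₂(τ) = −x₁(τ)·(1 − H(τ − π/2) + H(τ − 3π/2)) + (1/16)·cos τ + 2ω₂·cos τ − (1/2)·x₁''(τ). Then ∫_0^{2π} F₂(τ)·cos τ dτ = 2π·ω₂ + π/4; in particular this integral vanishes if and only if ω₂ = −1/8. -/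

import Mathlib

open Real MeasureTheory

/-- Heaviside function: `H y = 1` for `y > 0`, `H y = 0` for `y ≤ 0`. -/
noncomputable def H (y : ℝ) : ℝ := if 0 < y then 1 else 0

/-- First-order Lindstedt–Poincaré correction for `ẍ + (1 + εH(x))x = 0`. -/
noncomputable def x₁ (τ : ℝ) : ℝ :=
  ((1 / 2) * Real.cos τ + (-(π / 4) + τ / 2) * Real.sin τ) * H (τ - π / 2)
    + (-(1 / 2) * Real.cos τ + (3 * π / 4 - τ / 2) * Real.sin τ) * H (τ - 3 * π / 2)
    - (τ / 4) * Real.sin τ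

/-- Forcing of the second-order Lindstedt–Poincaré equation restricted to one
period `[0, 2π]`, with `ω₁ = 1/4` substituted; `x₁''` is taken as
`deriv (deriv x₁)`. -/
noncomputable def F₂ (ω₂ τ : ℝ) : ℝ :=
  -x₁ τ * (1 - H (τ - π / 2) + H (τ - 3 * π / 2)) + (1 / 16) * Real.cos τ
    + 2 * ω₂ * Real.cos τ - (1 / 2) * deriv (deriv x₁) τ


/-! ### Auxiliary material -/

lemma H_of_pos {y : ℝ} (h : 0 < y) : H y = 1 := if_pos h
lemma H_of_nonpos {y : ℝ} (h : y ≤ 0) : H y = 0 := if_neg (not_lt.2 h)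

/-- Linear-times-trig functions: the building block of all pieces of `x₁`. -/
noncomputable def LTrig (a b c d t : ℝ) : ℝ :=
  (a + b * t) * Real.sin t + (c + d * t) * Real.cos t

lemma hasDerivAt_LT (a b c d τ : ℝ) :
    HasDerivAt (LTrig a b c d) (LTrig (b - c) (-d) (a + d) b τ) τ := by
  have h1 : HasDerivAt (fun t : ℝ => a + b * t) b τ := by
    simpa using ((hasDerivAt_id τ).const_mul b).const_add a
  have h2 : HasDerivAt (fun t : ℝ => c + d * t) d τ := by
    simpa using ((hasDerivAt_id τ).const_mul d).const_add c
  have h := (h1.mul (Real.hasDerivAt_sin τ)).add (h2.mul (Real.hasDerivAt_cos τ))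
  unfold LTrig
  exact h.congr_deriv (by ring)

lemma deriv_LT (a b c d : ℝ) :
    deriv (LTrig a b c d) = LTrig (b - c) (-d) (a + d) b :=
  funext fun τ => (hasDerivAt_LT a b c d τ).deriv

/-- The trig-polynomial shape of the integrand on each piece. -/
noncomputable def Q (α β γ τ : ℝ) : ℝ :=
  α * Real.cos τ ^ 2 + β * (Real.sin τ * Real.cos τ) + γ * (τ * Real.sin τ * Real.cos τ)

/-- Antiderivative of `Q α β γ`. -/
noncomputable def G (α β γ τ : ℝ) : ℝ :=
  α * (τ / 2 + Real.sin τ * Real.cos τ / 2) + β * (Real.sin τ ^ 2 / 2)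
    + γ * ((τ / 4) * (1 - 2 * Real.cos τ ^ 2) + Real.sin τ * Real.cos τ / 4)

lemma hasDerivAt_G (α β γ τ : ℝ) : HasDerivAt (G α β γ) (Q α β γ τ) τ := by
  have hs := Real.hasDerivAt_sin τ
  have hc := Real.hasDerivAt_cos τ
  have h1 : HasDerivAt (fun t : ℝ => t / 2 + Real.sin t * Real.cos t / 2)
      (1 / 2 + (Real.cos τ * Real.cos τ + Real.sin τ * -Real.sin τ) / 2) τ :=
    ((hasDerivAt_id τ).div_const 2).add ((hs.mul hc).div_const 2)
  have h2 := (hs.pow 2).div_const 2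
  have h3a := (hasDerivAt_id τ).div_const 4
  have h3b := ((hc.pow 2).const_mul 2).const_sub 1
  have h3 := (h3a.mul h3b).add ((hs.mul hc).div_const 4)
  have h := ((h1.const_mul α).add (h2.const_mul β)).add (h3.const_mul γ)
  unfold G Q
  refine h.congr_deriv ?_
  push_cast
  simp only [id_eq, Pi.pow_apply]
  linear_combination -(α / 2 + γ / 4) * Real.sin_sq_add_cos_sq τ

lemma continuous_Q (α β γ : ℝ) : Continuous (Q α β γ) := by
  unfold Q; fun_prop

/-- `x₁` on the three pieces. -/
lemma x₁_eq₀ {τ : ℝ} (h : τ ≤ π / 2) : x₁ τ = LTrig 0 (-(1/4)) 0 0 τ := by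
  have hπ := Real.pi_pos
  unfold x₁ LTrig
  rw [H_of_nonpos (by linarith), H_of_nonpos (by linarith)]
  ring

lemma x₁_eq₁ {τ : ℝ} (h1 : π / 2 < τ) (h2 : τ ≤ 3 * π / 2) :
    x₁ τ = LTrig (-(π/4)) (1/4) (1/2) 0 τ := by
  unfold x₁ LTrig
  rw [H_of_pos (by linarith), H_of_nonpos (by linarith)]
  ring

lemma x₁_eq₂ {τ : ℝ} (h : 3 * π / 2 < τ) : x₁ τ = LTrig (π/2) (-(1/4)) 0 0 τ := by
  have hπ := Real.pi_pos
  unfold x₁ LTrig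
  rw [H_of_pos (by linarith), H_of_pos (by linarith)]
  ring

/-- Second derivative of `x₁` agrees locally with that of any local model. -/
lemma dd_x₁_eq {s : Set ℝ} (hs : IsOpen s) {f : ℝ → ℝ}
    (hf : ∀ y ∈ s, x₁ y = f y) {τ : ℝ} (hτ : τ ∈ s) :
    deriv (deriv x₁) τ = deriv (deriv f) τ := by
  have h : x₁ =ᶠ[nhds τ] f := Filter.eventually_of_mem (hs.mem_nhds hτ) hf
  exact h.deriv.deriv_eq

lemma ae_ne (b : ℝ) : ∀ᵐ x : ℝ, x ≠ b := by
  have h : ({x : ℝ | ¬ x ≠ b}) = {b} := by ext x; simp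
  rw [MeasureTheory.ae_iff, h]
  exact measure_singleton b

/-- Generic single-piece integral computation and integrability. -/
lemma integral_eq_G (f : ℝ → ℝ) (α β γ a b : ℝ) (hab : a ≤ b)
    (hfe : ∀ τ ∈ Set.Ioo a b, f τ = Q α β γ τ) :
    (∫ τ in a..b, f τ) = G α β γ b - G α β γ a ∧ IntervalIntegrable f volume a b := by
  have hQc := continuous_Q α β γ
  have hae : ∀ᵐ x ∂(volume : Measure ℝ), x ∈ Set.uIoc a b → f x = Q α β γ x := by
    filter_upwards [ae_ne b] with x hx hmem
    rw [Set.uIoc_of_le hab] at hmem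
    exact hfe x ⟨hmem.1, lt_of_le_of_ne hmem.2 hx⟩
  constructor
  · rw [intervalIntegral.integral_congr_ae hae]
    exact intervalIntegral.integral_eq_sub_of_hasDerivAt
      (fun τ _ => hasDerivAt_G α β γ τ) (hQc.intervalIntegrable (μ := volume) a b)
  · have hQint := hQc.intervalIntegrable (μ := volume) a b
    rw [intervalIntegrable_iff] at hQint ⊢
    exact hQint.congr (Filter.EventuallyEq.symm ((ae_restrict_iff' measurableSet_uIoc).2 hae))

theorem stmt_5 (ω₂ : ℝ) :
    (∫ τ in (0 : ℝ)..(2 * π), F₂ ω₂ τ * Real.cos τ) = 2 * π * ω₂ + π / 4 ∧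
    ((∫ τ in (0 : ℝ)..(2 * π), F₂ ω₂ τ * Real.cos τ) = 0 ↔ ω₂ = -(1 / 8)) := by
  have hπ := Real.pi_pos
  -- pointwise identities on the three open pieces
  have e₀ : ∀ τ ∈ Set.Ioo (0:ℝ) (π/2),
      F₂ ω₂ τ * Real.cos τ = Q (5/16 + 2*ω₂) 0 (1/8) τ := by
    intro τ ⟨h1, h2⟩
    have hdd : deriv (deriv x₁) τ = deriv (deriv (LTrig 0 (-(1/4)) 0 0)) τ :=
      dd_x₁_eq isOpen_Iio (fun y hy => x₁_eq₀ (le_of_lt hy)) h2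
    unfold F₂
    rw [x₁_eq₀ h2.le, H_of_nonpos (by linarith), H_of_nonpos (by linarith),
      hdd, deriv_LT, deriv_LT]
    unfold LTrig Q
    ring
  have e₁ : ∀ τ ∈ Set.Ioo (π/2) (3*π/2),
      F₂ ω₂ τ * Real.cos τ = Q (1/16 + 2*ω₂) (-(π/8)) (1/8) τ := by
    intro τ ⟨h1, h2⟩
    have hdd : deriv (deriv x₁) τ = deriv (deriv (LTrig (-(π/4)) (1/4) (1/2) 0)) τ :=
      dd_x₁_eq isOpen_Ioo (fun y hy => x₁_eq₁ hy.1 hy.2.le) ⟨h1, h2⟩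
    unfold F₂
    rw [x₁_eq₁ h1 h2.le, H_of_pos (by linarith), H_of_nonpos (by linarith),
      hdd, deriv_LT, deriv_LT]
    unfold LTrig Q
    ring
  have e₂ : ∀ τ ∈ Set.Ioo (3*π/2) (2*π),
      F₂ ω₂ τ * Real.cos τ = Q (5/16 + 2*ω₂) (-(π/4)) (1/8) τ := by
    intro τ ⟨h1, h2⟩
    have hdd : deriv (deriv x₁) τ = deriv (deriv (LTrig (π/2) (-(1/4)) 0 0)) τ :=
      dd_x₁_eq isOpen_Ioi (fun y hy => x₁_eq₂ hy) h1
    unfold F₂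
    rw [x₁_eq₂ h1, H_of_pos (by linarith), H_of_pos (by linarith),
      hdd, deriv_LT, deriv_LT]
    unfold LTrig Q
    ring
  obtain ⟨I₀, int₀⟩ := integral_eq_G (fun τ => F₂ ω₂ τ * Real.cos τ)
    (5/16 + 2*ω₂) 0 (1/8) 0 (π/2) (by linarith) e₀
  obtain ⟨I₁, int₁⟩ := integral_eq_G (fun τ => F₂ ω₂ τ * Real.cos τ)
    (1/16 + 2*ω₂) (-(π/8)) (1/8) (π/2) (3*π/2) (by linarith) e₁
  obtain ⟨I₂, int₂⟩ := integral_eq_G (fun τ => F₂ ω₂ τ * Real.cos τ)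
    (5/16 + 2*ω₂) (-(π/4)) (1/8) (3*π/2) (2*π) (by linarith) e₂
  have key : (∫ τ in (0 : ℝ)..(2 * π), F₂ ω₂ τ * Real.cos τ) = 2 * π * ω₂ + π / 4 := by
    rw [← intervalIntegral.integral_add_adjacent_intervals (int₀.trans int₁) int₂,
      ← intervalIntegral.integral_add_adjacent_intervals int₀ int₁, I₀, I₁, I₂]
    have h32s : Real.sin (3*π/2) = -1 := by
      rw [show (3*π/2 : ℝ) = π + π/2 by ring, Real.sin_add]; simp
    have h32c : Real.cos (3*π/2) = 0 := by
      rw [show (3*π/2 : ℝ) = π + π/2 by ring, Real.cos_add]; simp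
    unfold G
    rw [h32s, h32c, Real.sin_pi_div_two, Real.cos_pi_div_two, Real.sin_two_pi,
      Real.cos_two_pi, Real.sin_zero, Real.cos_zero]
    ring
  refine ⟨key, ?_⟩
  rw [key]
  constructor
  · intro h
    have h2 : 2 * π * (ω₂ + 1/8) = 0 := by linarith
    have h3 : ω₂ + 1/8 = 0 := by
      rcases mul_eq_zero.1 h2 with h4 | h4
      · exfalso; nlinarith
      · exact h4
    linarith
  · intro h; rw [h]; ring
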